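/- For positive definite n×n complex matrices A, B and any complex z with 1/4 ≤ Re(z) ≤ 3/4, Re Tr(A^z B^z A^{1-z} B^{1-z}) ≤ Tr(AB). -/

import Mathlib

open Matrix Complex
open scoped ComplexOrder

/-- Real power of a (Hermitian, intended positive semidefinite) matrix via the spectral
decomposition; junk value `A` if `A` is not Hermitian. -/
noncomputable def Matrix.mpow {n : ℕ} (A : Matrix (Fin n) (Fin n) ℂ) (t : ℝ) :
    Matrix (Fin n) (Fin n) ℂ :=
  if hA : A.IsHermitian then
    (hA.eigenvectorUnitary : Matrix (Fin n) (Fin n) ℂ) *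
      Matrix.diagonal (fun i => ((hA.eigenvalues i ^ t : ℝ) : ℂ)) *
      (star (hA.eigenvectorUnitary : Matrix (Fin n) (Fin n) ℂ))
  else A

/-- Complex power `A ^ z = exp (z log A)` of a (Hermitian, intended positive definite) matrix via
the spectral decomposition; junk value `A` if `A` is not Hermitian. -/
noncomputable def Matrix.mcpow {n : ℕ} (A : Matrix (Fin n) (Fin n) ℂ) (z : ℂ) :
    Matrix (Fin n) (Fin n) ℂ :=
  if hA : A.IsHermitian then
    (hA.eigenvectorUnitary : Matrix (Fin n) (Fin n) ℂ) *
      Matrix.diagonal (fun i => Complex.exp (z * Real.log (hA.eigenvalues i))) *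
      (star (hA.eigenvectorUnitary : Matrix (Fin n) (Fin n) ℂ))
  else A

/-- Schatten `r`-norm of a matrix: `(∑ sᵢ(X)^r)^(1/r)`, where the `sᵢ(X)` are the singular
values, i.e. the square roots of the eigenvalues of `Xᴴ * X`. -/
noncomputable def Matrix.schatten {n : ℕ} (r : ℝ) (X : Matrix (Fin n) (Fin n) ℂ) : ℝ :=
  (∑ i, ((Matrix.posSemidef_conjTranspose_mul_self X).1.eigenvalues i) ^ (r / 2)) ^ (1 / r)

/-- Frobenius (Hilbert–Schmidt) norm of a matrix. -/
noncomputable def Matrix.frob {n : ℕ} (X : Matrix (Fin n) (Fin n) ℂ) : ℝ :=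
  Real.sqrt (Xᴴ * X).trace.re

/-- Operator (spectral) norm of a matrix. -/
noncomputable def Matrix.opNorm {n : ℕ} (X : Matrix (Fin n) (Fin n) ℂ) : ℝ :=
  ‖Matrix.toEuclideanCLM (𝕜 := ℂ) X‖

/-- Smallest singular value of a matrix. -/
noncomputable def Matrix.sMin {n : ℕ} (X : Matrix (Fin n) (Fin n) ℂ) : ℝ :=
  ⨅ i, Real.sqrt ((Matrix.posSemidef_conjTranspose_mul_self X).1.eigenvalues i)

/-!
Let `F z = Tr(A^z B^z A^{1-z} B^{1-z})`. It is entire, bounded on vertical strips and satisfies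
`F (1 - z) = F z`, so by the three-lines theorem it suffices to bound `‖F z‖` by `Tr(AB)` on the
lines `Re z = 1/4` and `Re z = 1/2`. Both bounds come from the Cauchy–Schwarz inequality
`‖Tr(XY)‖ ≤ ‖X‖₂ ‖Y‖₂` for the Frobenius norm, together with `(A^z)ᴴ = A^{z̄}`, which gives
`‖A^z B^z‖₂² = Tr(AB)` when `Re z = 1/2`. On `Re z = 1/4` put `G = A^{1/2} B^{1/2}`; then
`F z = Tr(G X Y)` with `X = B^{1/2-z} A^z` and `Y = B^z A^{1/2-z}`, and
`‖XY‖₂² ≤ ‖XᴴX‖₂ ‖YYᴴ‖₂`, where `‖XᴴX‖₂²` and `‖YYᴴ‖₂²` both equal `Re Tr(G²) ≤ ‖G‖₂² = Tr(AB)`.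
-/

open scoped Matrix.Norms.Frobenius

theorem Complex.conj_eq_two_mul_re_sub (z : ℂ) : starRingEnd ℂ z = 2 * z.re - z := by
  rw [eq_sub_iff_add_eq', add_conj]
  push_cast
  ring

theorem Complex.HadamardThreeLines.norm_le_of_mem_verticalClosedStrip {E : Type*}
    [NormedAddCommGroup E] [NormedSpace ℂ E] {f : ℂ → E} {l u c : ℝ} {z : ℂ} (hlu : l < u)
    (hz : z ∈ verticalClosedStrip l u) (hf : DiffContOnCl ℂ f (verticalStrip l u))
    (hB : BddAbove ((norm ∘ f) '' verticalClosedStrip l u))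
    (hl : ∀ z ∈ re ⁻¹' {l}, ‖f z‖ ≤ c) (hu : ∀ z ∈ re ⁻¹' {u}, ‖f z‖ ≤ c) : ‖f z‖ ≤ c := by
  have hc : 0 ≤ c := (norm_nonneg _).trans (hl l (by simp))
  have h := norm_le_interp_of_mem_verticalClosedStrip' hlu hz hf hB hl hu
  rwa [← Real.rpow_add' hc (by simp), sub_add_cancel, Real.rpow_one] at h

namespace Matrix

section Frobenius

variable {l m n 𝕜 : Type*} [Fintype l] [Fintype m] [Fintype n] [RCLike 𝕜]

theorem frobenius_norm_eq_norm_toLp (X : Matrix m n 𝕜) :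
    ‖X‖ = ‖WithLp.toLp 2 fun i => WithLp.toLp 2 (X i)‖ := rfl

theorem inner_frobenius_toLp (X Y : Matrix m n 𝕜) :
    inner 𝕜 (WithLp.toLp 2 fun i => WithLp.toLp 2 (X i))
      (WithLp.toLp 2 fun i => WithLp.toLp 2 (Y i)) = (Xᴴ * Y).trace := by
  simp only [PiLp.inner_apply, RCLike.inner_apply, trace, diag, mul_apply, conjTranspose_apply]
  rw [Finset.sum_comm]
  simp [RCLike.star_def, mul_comm]

theorem frobenius_norm_sq_eq_re_trace (X : Matrix m n 𝕜) :
    ‖X‖ ^ 2 = RCLike.re (Xᴴ * X).trace := by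
  rw [frobenius_norm_eq_norm_toLp, ← inner_frobenius_toLp, norm_sq_eq_re_inner (𝕜 := 𝕜)]

theorem norm_trace_conjTranspose_mul_le (X Y : Matrix m n 𝕜) :
    ‖(Xᴴ * Y).trace‖ ≤ ‖X‖ * ‖Y‖ := by
  rw [← inner_frobenius_toLp]
  exact norm_inner_le_norm _ _

theorem norm_trace_mul_le (X : Matrix n m 𝕜) (Y : Matrix m n 𝕜) :
    ‖(X * Y).trace‖ ≤ ‖X‖ * ‖Y‖ := by
  simpa [frobenius_norm_conjTranspose] using norm_trace_conjTranspose_mul_le Xᴴ Y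

theorem frobenius_norm_mul_sq_le (X : Matrix l m 𝕜) (Y : Matrix m n 𝕜) :
    ‖X * Y‖ ^ 2 ≤ ‖Xᴴ * X‖ * ‖Y * Yᴴ‖ := by
  have hcyc : ((X * Y)ᴴ * (X * Y)).trace = ((Xᴴ * X) * (Y * Yᴴ)).trace := by
    rw [conjTranspose_mul, Matrix.mul_assoc, trace_mul_comm]
    simp only [Matrix.mul_assoc]
  calc ‖X * Y‖ ^ 2 = RCLike.re ((Xᴴ * X) * (Y * Yᴴ)).trace := by
        rw [frobenius_norm_sq_eq_re_trace, hcyc]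
    _ ≤ ‖((Xᴴ * X) * (Y * Yᴴ)).trace‖ := RCLike.re_le_norm _
    _ ≤ ‖Xᴴ * X‖ * ‖Y * Yᴴ‖ := norm_trace_mul_le _ _

theorem norm_trace_mul_le_of_sq_le {T : ℝ} {X : Matrix n m 𝕜} {Y : Matrix m n 𝕜}
    (hX : ‖X‖ ^ 2 ≤ T) (hY : ‖Y‖ ^ 2 ≤ T) : ‖(X * Y).trace‖ ≤ T := by
  linarith [norm_trace_mul_le X Y, two_mul_le_add_sq ‖X‖ ‖Y‖]

theorem frobenius_norm_mul_sq_le_of_sq_le {T : ℝ} {X : Matrix l m 𝕜} {Y : Matrix m n 𝕜}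
    (hX : ‖Xᴴ * X‖ ^ 2 ≤ T) (hY : ‖Y * Yᴴ‖ ^ 2 ≤ T) : ‖X * Y‖ ^ 2 ≤ T := by
  linarith [frobenius_norm_mul_sq_le X Y, two_mul_le_add_sq ‖Xᴴ * X‖ ‖Y * Yᴴ‖]

end Frobenius

variable {n : ℕ} {A B : Matrix (Fin n) (Fin n) ℂ}

namespace IsHermitian

theorem mcpow_eq_conjStarAlgAut (hA : A.IsHermitian) (z : ℂ) :
    A.mcpow z = Unitary.conjStarAlgAut ℂ _ hA.eigenvectorUnitary
      (diagonal fun i => Complex.exp (z * Real.log (hA.eigenvalues i))) := by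
  rw [Matrix.mcpow, dif_pos hA, Unitary.conjStarAlgAut_apply]

theorem mcpow_add (hA : A.IsHermitian) (z w : ℂ) :
    A.mcpow (z + w) = A.mcpow z * A.mcpow w := by
  simp only [hA.mcpow_eq_conjStarAlgAut, ← map_mul, diagonal_mul_diagonal, add_mul,
    Complex.exp_add]

theorem mcpow_mul_mcpow_mul (hA : A.IsHermitian) (z w : ℂ) (M : Matrix (Fin n) (Fin n) ℂ) :
    A.mcpow z * (A.mcpow w * M) = A.mcpow (z + w) * M := by
  rw [hA.mcpow_add, Matrix.mul_assoc]

theorem conjTranspose_mcpow (hA : A.IsHermitian) (z : ℂ) :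
    (A.mcpow z)ᴴ = A.mcpow (starRingEnd ℂ z) := by
  rw [hA.mcpow_eq_conjStarAlgAut, hA.mcpow_eq_conjStarAlgAut, ← star_eq_conjTranspose, ← map_star,
    star_eq_conjTranspose, diagonal_conjTranspose]
  congr
  funext i
  simp [← Complex.exp_conj]

theorem trace_mcpow (hA : A.IsHermitian) (z : ℂ) :
    (A.mcpow z).trace = ∑ i, Complex.exp (z * Real.log (hA.eigenvalues i)) := by
  rw [hA.mcpow_eq_conjStarAlgAut, Unitary.conjStarAlgAut_apply, trace_mul_cycle,
    Unitary.coe_star_mul_self, Matrix.one_mul, trace_diagonal]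

theorem differentiable_mcpow (hA : A.IsHermitian) : Differentiable ℂ A.mcpow := by
  have hdiag : Differentiable ℂ fun z : ℂ =>
      diagonal fun i => Complex.exp (z * Real.log (hA.eigenvalues i)) :=
    (diagonalLinearMap (Fin n) ℂ ℂ).toContinuousLinearMap.differentiable.comp
      (differentiable_pi.2 fun i => by fun_prop)
  simp only [funext hA.mcpow_eq_conjStarAlgAut, Unitary.conjStarAlgAut_apply]
  exact ((differentiable_const _).mul hdiag).mul (differentiable_const _)

theorem frobenius_norm_mcpow_sq (hA : A.IsHermitian) (z : ℂ) :
    ‖A.mcpow z‖ ^ 2 = ∑ i, Real.exp (2 * z.re * Real.log (hA.eigenvalues i)) := by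
  rw [frobenius_norm_sq_eq_re_trace, hA.conjTranspose_mcpow, ← hA.mcpow_add, hA.trace_mcpow]
  simp [Complex.exp_re, two_mul]

theorem frobenius_norm_mcpow_eq_re (hA : A.IsHermitian) (z : ℂ) :
    ‖A.mcpow z‖ = ‖A.mcpow z.re‖ := by
  rw [← sq_eq_sq₀ (norm_nonneg _) (norm_nonneg _), hA.frobenius_norm_mcpow_sq,
    hA.frobenius_norm_mcpow_sq, Complex.ofReal_re]

end IsHermitian

theorem PosDef.mcpow_one (hA : A.PosDef) : A.mcpow 1 = A := by
  conv_rhs => rw [hA.1.spectral_theorem]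
  rw [hA.1.mcpow_eq_conjStarAlgAut]
  congr
  funext i
  simp [← Complex.ofReal_exp, Real.exp_log (hA.eigenvalues_pos i)]

theorem frobenius_norm_mcpow_mul_mcpow_sq (hA : A.PosDef) (hB : B.PosDef) {z : ℂ}
    (hz : z.re = 1 / 2) : ‖A.mcpow z * B.mcpow z‖ ^ 2 = (A * B).trace.re := by
  have hconj : starRingEnd ℂ z = 1 - z := by
    rw [Complex.conj_eq_two_mul_re_sub, hz]
    push_cast
    ring
  rw [frobenius_norm_sq_eq_re_trace, conjTranspose_mul, hA.1.conjTranspose_mcpow,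
    hB.1.conjTranspose_mcpow, hconj]
  simp only [Matrix.mul_assoc, hA.1.mcpow_mul_mcpow_mul, sub_add_cancel, hA.mcpow_one]
  rw [trace_mul_comm, Matrix.mul_assoc, ← hB.1.mcpow_add, add_sub_cancel, hB.mcpow_one]
  rfl

noncomputable def mixedPowTrace (A B : Matrix (Fin n) (Fin n) ℂ) (z : ℂ) : ℂ :=
  (A.mcpow z * B.mcpow z * A.mcpow (1 - z) * B.mcpow (1 - z)).trace

theorem mixedPowTrace_one_sub (A B : Matrix (Fin n) (Fin n) ℂ) (z : ℂ) :
    mixedPowTrace A B (1 - z) = mixedPowTrace A B z := by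
  rw [mixedPowTrace, mixedPowTrace, sub_sub_cancel, Matrix.mul_assoc _ (A.mcpow z),
    Matrix.mul_assoc (A.mcpow z * B.mcpow z), trace_mul_comm]

theorem mixedPowTrace_eq_trace_mul_mul (hA : A.IsHermitian) (hB : B.IsHermitian) (z : ℂ) :
    mixedPowTrace A B z = (A.mcpow (1 / 2) * B.mcpow (1 / 2) *
      ((B.mcpow (1 / 2 - z) * A.mcpow z) * (B.mcpow z * A.mcpow (1 / 2 - z)))).trace := by
  have h : (1 / 2 : ℂ) + (1 / 2 - z) = 1 - z := by ring
  have h' : (1 / 2 : ℂ) - z + 1 / 2 = 1 - z := by ring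
  simp only [Matrix.mul_assoc, hB.mcpow_mul_mcpow_mul, h]
  rw [trace_mul_comm]
  simp only [Matrix.mul_assoc, ← hA.mcpow_add, h']
  rw [trace_mul_comm, mixedPowTrace]
  simp only [Matrix.mul_assoc]

theorem frobenius_norm_conjTranspose_mul_self_sq_of_re_eq_quarter (hA : A.IsHermitian)
    (hB : B.IsHermitian) {z : ℂ} (hz : z.re = 1 / 4) :
    ‖(B.mcpow (1 / 2 - z) * A.mcpow z)ᴴ * (B.mcpow (1 / 2 - z) * A.mcpow z)‖ ^ 2 =
      ((A.mcpow (1 / 2) * B.mcpow (1 / 2)) * (A.mcpow (1 / 2) * B.mcpow (1 / 2))).trace.re := by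
  have hX : (B.mcpow (1 / 2 - z) * A.mcpow z)ᴴ = A.mcpow (1 / 2 - z) * B.mcpow z := by
    rw [conjTranspose_mul, hA.conjTranspose_mcpow, hB.conjTranspose_mcpow,
      Complex.conj_eq_two_mul_re_sub, Complex.conj_eq_two_mul_re_sub]
    congr 2 <;> simp [hz] <;> ring
  rw [frobenius_norm_sq_eq_re_trace, (isHermitian_conjTranspose_mul_self _).eq, hX]
  simp only [Matrix.mul_assoc, hA.mcpow_mul_mcpow_mul, hB.mcpow_mul_mcpow_mul, add_sub_cancel]
  rw [trace_mul_comm]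
  simp only [Matrix.mul_assoc, ← hA.mcpow_add, add_sub_cancel]
  rw [trace_mul_comm]
  simp only [Matrix.mul_assoc]
  rfl

theorem frobenius_norm_mul_conjTranspose_self_sq_of_re_eq_quarter (hA : A.IsHermitian)
    (hB : B.IsHermitian) {z : ℂ} (hz : z.re = 1 / 4) :
    ‖(B.mcpow z * A.mcpow (1 / 2 - z)) * (B.mcpow z * A.mcpow (1 / 2 - z))ᴴ‖ ^ 2 =
      ((A.mcpow (1 / 2) * B.mcpow (1 / 2)) * (A.mcpow (1 / 2) * B.mcpow (1 / 2))).trace.re := by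
  have hX : (B.mcpow z * A.mcpow (1 / 2 - z))ᴴ = A.mcpow z * B.mcpow (1 / 2 - z) := by
    rw [conjTranspose_mul, hA.conjTranspose_mcpow, hB.conjTranspose_mcpow,
      Complex.conj_eq_two_mul_re_sub, Complex.conj_eq_two_mul_re_sub]
    congr 2 <;> simp [hz] <;> ring
  rw [frobenius_norm_sq_eq_re_trace, (isHermitian_mul_conjTranspose_self _).eq, hX]
  simp only [Matrix.mul_assoc, hA.mcpow_mul_mcpow_mul, hB.mcpow_mul_mcpow_mul, sub_add_cancel]
  rw [trace_mul_comm]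
  simp only [Matrix.mul_assoc, ← hB.mcpow_add, sub_add_cancel]
  rfl

theorem differentiable_mixedPowTrace (hA : A.IsHermitian) (hB : B.IsHermitian) :
    Differentiable ℂ (mixedPowTrace A B) := by
  have hA' := hA.differentiable_mcpow
  have hB' := hB.differentiable_mcpow
  have hsub : Differentiable ℂ fun z : ℂ => 1 - z := (differentiable_const 1).sub differentiable_id
  exact (traceLinearMap (Fin n) ℂ ℂ).toContinuousLinearMap.differentiable.comp
    (((hA'.mul hB').mul (hA'.comp hsub)).mul (hB'.comp hsub))

theorem bddAbove_norm_mixedPowTrace (hA : A.IsHermitian) (hB : B.IsHermitian) (l u : ℝ) :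
    BddAbove ((norm ∘ mixedPowTrace A B) ''
      Complex.HadamardThreeLines.verticalClosedStrip l u) := by
  set bound : ℝ → ℝ := fun x =>
    ‖A.mcpow x‖ * ‖B.mcpow x‖ * (‖A.mcpow (1 - x : ℝ)‖ * ‖B.mcpow (1 - x : ℝ)‖)
  have hbound : ∀ z, ‖mixedPowTrace A B z‖ ≤ bound z.re := fun z =>
    calc ‖mixedPowTrace A B z‖
        ≤ ‖A.mcpow z * B.mcpow z‖ * ‖A.mcpow (1 - z) * B.mcpow (1 - z)‖ := by
          rw [mixedPowTrace, Matrix.mul_assoc _ (A.mcpow (1 - z))]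
          exact norm_trace_mul_le _ _
      _ ≤ ‖A.mcpow z‖ * ‖B.mcpow z‖ * (‖A.mcpow (1 - z)‖ * ‖B.mcpow (1 - z)‖) := by
          gcongr <;> exact frobenius_norm_mul _ _
      _ = bound z.re := by
          rw [hA.frobenius_norm_mcpow_eq_re z, hB.frobenius_norm_mcpow_eq_re z,
            hA.frobenius_norm_mcpow_eq_re (1 - z), hB.frobenius_norm_mcpow_eq_re (1 - z)]
          simp only [bound, Complex.sub_re, Complex.one_re]
  have hcont : Continuous bound := by
    have := hA.differentiable_mcpow.continuous
    have := hB.differentiable_mcpow.continuous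
    fun_prop
  obtain ⟨C, hC⟩ := (isCompact_Icc (a := l) (b := u)).bddAbove_image hcont.continuousOn
  exact ⟨C, by rintro _ ⟨z, hz, rfl⟩; exact (hbound z).trans (hC ⟨z.re, hz, rfl⟩)⟩

theorem norm_mixedPowTrace_le_of_re_eq_half (hA : A.PosDef) (hB : B.PosDef) {z : ℂ}
    (hz : z.re = 1 / 2) : ‖mixedPowTrace A B z‖ ≤ (A * B).trace.re := by
  have hz' : (1 - z).re = 1 / 2 := by simp [hz]; norm_num
  rw [mixedPowTrace, Matrix.mul_assoc _ (A.mcpow (1 - z))]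
  exact norm_trace_mul_le_of_sq_le (frobenius_norm_mcpow_mul_mcpow_sq hA hB hz).le
    (frobenius_norm_mcpow_mul_mcpow_sq hA hB hz').le

theorem norm_mixedPowTrace_le_of_re_eq_quarter (hA : A.PosDef) (hB : B.PosDef) {z : ℂ}
    (hz : z.re = 1 / 4) : ‖mixedPowTrace A B z‖ ≤ (A * B).trace.re := by
  have hG : ‖A.mcpow (1 / 2) * B.mcpow (1 / 2)‖ ^ 2 = (A * B).trace.re :=
    frobenius_norm_mcpow_mul_mcpow_sq hA hB (by norm_num)
  have hGG : ((A.mcpow (1 / 2) * B.mcpow (1 / 2)) *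
      (A.mcpow (1 / 2) * B.mcpow (1 / 2))).trace.re ≤ (A * B).trace.re :=
    (Complex.re_le_norm _).trans (norm_trace_mul_le_of_sq_le hG.le hG.le)
  rw [mixedPowTrace_eq_trace_mul_mul hA.1 hB.1]
  exact norm_trace_mul_le_of_sq_le hG.le (frobenius_norm_mul_sq_le_of_sq_le
    ((frobenius_norm_conjTranspose_mul_self_sq_of_re_eq_quarter hA.1 hB.1 hz).trans_le hGG)
    ((frobenius_norm_mul_conjTranspose_self_sq_of_re_eq_quarter hA.1 hB.1 hz).trans_le hGG))

theorem norm_mixedPowTrace_le_of_re_mem_Icc (hA : A.PosDef) (hB : B.PosDef) {z : ℂ}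
    (hz₁ : 1 / 4 ≤ z.re) (hz₂ : z.re ≤ 1 / 2) : ‖mixedPowTrace A B z‖ ≤ (A * B).trace.re :=
  Complex.HadamardThreeLines.norm_le_of_mem_verticalClosedStrip (by norm_num) ⟨hz₁, hz₂⟩
    (differentiable_mixedPowTrace hA.1 hB.1).diffContOnCl
    (bddAbove_norm_mixedPowTrace hA.1 hB.1 _ _)
    (fun _ hw => norm_mixedPowTrace_le_of_re_eq_quarter hA hB hw)
    (fun _ hw => norm_mixedPowTrace_le_of_re_eq_half hA hB hw)

end Matrix

theorem stmt3 {n : ℕ} {A B : Matrix (Fin n) (Fin n) ℂ}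
    (hA : A.PosDef) (hB : B.PosDef) (z : ℂ) (hz1 : 1 / 4 ≤ z.re) (hz2 : z.re ≤ 3 / 4) :
    (A.mcpow z * B.mcpow z * A.mcpow (1 - z) * B.mcpow (1 - z)).trace.re ≤
      (A * B).trace.re := by
  change (mixedPowTrace A B z).re ≤ _
  refine (Complex.re_le_norm _).trans ?_
  rcases le_total z.re (1 / 2) with h | h
  · exact norm_mixedPowTrace_le_of_re_mem_Icc hA hB hz1 h
  · rw [← mixedPowTrace_one_sub]
    exact norm_mixedPowTrace_le_of_re_mem_Icc hA hB (by simp; linarith) (by simp; linarith)
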